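/- arXiv:2412.06525 — 4 statements merged into one kernel-verified Lean document; each statement's English description precedes it below -/
import Mathlib

section
/- Let ν ∈ ℝ and let u_{i−3/2}, u_{i−1/2}, u_{i+1/2}, ū_{i−1}, ū_i be real numbers. Define the reconstructions q_{i−1} and q_i by q_j(ζ) = u_{j−1/2}(ζ−1)(2ζ−1) + (6ū_j − u_{j−1/2} − u_{j+1/2})ζ(1−ζ) + u_{j+1/2}ζ(2ζ−1), and define the Simpson-rule flux factors F_{j+1/2} = (1/6)(q_j(1) + 4 q_j(1−ν/2) + q_j(1−ν)). Then the finite-volume update satisfies the identity ū_i + ν(F_{i−1/2} − F_{i+1/2}) = ν²(ν−1) u_{i−3/2} + ν²(3−2ν) ū_{i−1} + ν(1−ν) u_{i−1/2} + (1−ν)²(1+2ν) ū_i − ν(1−ν)² u_{i+1/2}, which is the explicit Active Flux cell-average update formula for a ≥ 0. -/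
/-- The finite-volume update of the Active Flux cell average with Simpson-rule
fluxes coincides with the explicit Active Flux cell-average update formula
(case `a ≥ 0`). -/
theorem active_flux_cell_average_update_formula
    (ν u_im32 u_im12 u_ip12 ubar_im1 ubar_i : ℝ)
    (q_im1 q_i : ℝ → ℝ)
    (hq_im1 : ∀ ζ : ℝ, q_im1 ζ =
      u_im32 * (ζ - 1) * (2 * ζ - 1)
        + (6 * ubar_im1 - u_im32 - u_im12) * ζ * (1 - ζ)
        + u_im12 * ζ * (2 * ζ - 1))
    (hq_i : ∀ ζ : ℝ, q_i ζ =
      u_im12 * (ζ - 1) * (2 * ζ - 1)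
        + (6 * ubar_i - u_im12 - u_ip12) * ζ * (1 - ζ)
        + u_ip12 * ζ * (2 * ζ - 1))
    (F_im12 F_ip12 : ℝ)
    (hF_im12 : F_im12 = (q_im1 1 + 4 * q_im1 (1 - ν / 2) + q_im1 (1 - ν)) / 6)
    (hF_ip12 : F_ip12 = (q_i 1 + 4 * q_i (1 - ν / 2) + q_i (1 - ν)) / 6) :
    ubar_i + ν * (F_im12 - F_ip12) =
      ν ^ 2 * (ν - 1) * u_im32 + ν ^ 2 * (3 - 2 * ν) * ubar_im1
        + ν * (1 - ν) * u_im12 + (1 - ν) ^ 2 * (1 + 2 * ν) * ubar_i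
        - ν * (1 - ν) ^ 2 * u_ip12 := by
  simp only [hF_im12, hF_ip12, hq_im1, hq_i]
  ring
end

section
/- Let p : ℝ → ℝ be a polynomial of degree at most 2, let a ≥ 0, Δx > 0, Δt ≥ 0 with ν = aΔt/Δx ∈ [0,1], and consider a uniform grid with interfaces x_{j+1/2} = x_{−1/2} + (j+1)Δx. Sample the data exactly: u_{j+1/2} = p(x_{j+1/2}) and ū_j = (1/Δx)∫_{x_{j−1/2}}^{x_{j+1/2}} p(x) dx. Then the Active Flux update formulas reproduce the exact solution of ∂_t u + a∂_x u = 0 with initial datum p after one time step: ν(3ν−2)u_{i−1/2} + 6ν(1−ν)ū_i + (1−ν)(1−3ν)u_{i+1/2} = p(x_{i+1/2} − aΔt), and ν²(ν−1)u_{i−3/2} + ν²(3−2ν)ū_{i−1} + ν(1−ν)u_{i−1/2} + (1−ν)²(1+2ν)ū_i − ν(1−ν)²u_{i+1/2} = (1/Δx)∫_{x_{i−1/2}}^{x_{i+1/2}} p(x − aΔt) dx. -/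
/-!
Point values and cell averages of a quadratic are explicit in its three coefficients (the
averages through the antiderivative `∑ cₖ xᵏ⁺¹/(k+1)`), and so are those of the translate
`p(· - νh)`, whose cell average is a shifted integral of `p`. Writing the cell as `[x - h, x]` and
`aΔt = νh`, each Active Flux update becomes a polynomial identity in `x, h, ν` and the
coefficients once the factors `1/h` are cleared.
-/

open Polynomial Finset intervalIntegral

namespace Polynomial

theorem intervalIntegral_eval_eq_sum_range {p : ℝ[X]} {n : ℕ} (hn : p.natDegree < n)
    (A B : ℝ) :
    ∫ x in A..B, p.eval x = ∑ k ∈ range n, p.coeff k * ((B ^ (k + 1) - A ^ (k + 1)) / (k + 1)) := by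
  simp_rw [eval_eq_sum_range' hn]
  rw [integral_finsetSum fun k _ =>
    ((continuous_pow k).const_mul (p.coeff k)).intervalIntegrable A B]
  simp only [integral_const_mul, integral_pow]

variable {p : ℝ[X]}

theorem natDegree_lt_three_of_degree_le_two (hp : p.degree ≤ 2) : p.natDegree < 3 :=
  (natDegree_le_iff_degree_le.2 hp).trans_lt (by norm_num)

theorem eval_eq_of_degree_le_two (hp : p.degree ≤ 2) (x : ℝ) :
    p.eval x = p.coeff 0 + p.coeff 1 * x + p.coeff 2 * x ^ 2 := by
  rw [eval_eq_sum_range' (natDegree_lt_three_of_degree_le_two hp)]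
  simp [sum_range_succ]

theorem intervalIntegral_eval_of_degree_le_two (hp : p.degree ≤ 2) (A B : ℝ) :
    ∫ x in A..B, p.eval x
      = p.coeff 0 * (B - A) + p.coeff 1 * (B ^ 2 - A ^ 2) / 2 + p.coeff 2 * (B ^ 3 - A ^ 3) / 3 := by
  rw [intervalIntegral_eval_eq_sum_range (natDegree_lt_three_of_degree_le_two hp)]
  simp only [sum_range_succ, sum_range_zero]
  push_cast
  ring

end Polynomial

section ActiveFlux

variable {p : ℝ[X]} {x h : ℝ}

theorem activeFlux_interface_update_exact (hp : p.degree ≤ 2) (hh : h ≠ 0) (ν : ℝ) :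
    ν * (3 * ν - 2) * p.eval (x - h) + 6 * ν * (1 - ν) * ((1 / h) * ∫ y in (x - h)..x, p.eval y)
        + (1 - ν) * (1 - 3 * ν) * p.eval x = p.eval (x - ν * h) := by
  rw [intervalIntegral_eval_of_degree_le_two hp]
  simp only [eval_eq_of_degree_le_two hp]
  field_simp
  ring

theorem activeFlux_average_update_exact (hp : p.degree ≤ 2) (hh : h ≠ 0) (ν : ℝ) :
    ν ^ 2 * (ν - 1) * p.eval (x - 2 * h)
        + ν ^ 2 * (3 - 2 * ν) * ((1 / h) * ∫ y in (x - 2 * h)..(x - h), p.eval y)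
        + ν * (1 - ν) * p.eval (x - h)
        + (1 - ν) ^ 2 * (1 + 2 * ν) * ((1 / h) * ∫ y in (x - h)..x, p.eval y)
        - ν * (1 - ν) ^ 2 * p.eval x =
      (1 / h) * ∫ y in (x - h)..x, p.eval (y - ν * h) := by
  rw [integral_comp_sub_right (fun y => p.eval y)]
  simp only [intervalIntegral_eval_of_degree_le_two hp]
  simp only [eval_eq_of_degree_le_two hp]
  field_simp
  ring

end ActiveFlux

theorem active_flux_exact_on_quadratics_one_step_general
    (p : Polynomial ℝ) (hp : p.degree ≤ 2)
    (a Δx Δt ν : ℝ) (hΔx : 0 < Δx)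
    (hν : ν = a * Δt / Δx)
    (xI : ℤ → ℝ) (xm : ℝ)
    -- `xI j` is the interface `x_{j+1/2} = x_{−1/2} + (j+1)Δx`
    (hxI : ∀ j : ℤ, xI j = xm + (j + 1) * Δx)
    (u : ℤ → ℝ) (ubar : ℤ → ℝ)
    (hu : ∀ j : ℤ, u j = p.eval (xI j))
    (hubar : ∀ j : ℤ, ubar j = (1 / Δx) * ∫ x in (xI (j - 1))..(xI j), p.eval x)
    (i : ℤ) :
    ν * (3 * ν - 2) * u (i - 1) + 6 * ν * (1 - ν) * ubar i
        + (1 - ν) * (1 - 3 * ν) * u i = p.eval (xI i - a * Δt) ∧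
    ν ^ 2 * (ν - 1) * u (i - 2) + ν ^ 2 * (3 - 2 * ν) * ubar (i - 1)
        + ν * (1 - ν) * u (i - 1) + (1 - ν) ^ 2 * (1 + 2 * ν) * ubar i
        - ν * (1 - ν) ^ 2 * u i =
      (1 / Δx) * ∫ x in (xI (i - 1))..(xI i), p.eval (x - a * Δt) := by
  have hshift : a * Δt = ν * Δx := by rw [hν, div_mul_cancel₀ _ hΔx.ne']
  have hxI_pred : xI (i - 1) = xI i - Δx := by simp only [hxI]; push_cast; ring
  have hxI_pred_pred : xI (i - 2) = xI i - 2 * Δx := by simp only [hxI]; push_cast; ring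
  simp only [hu, hubar, hshift, show i - 1 - 1 = i - 2 by ring, hxI_pred, hxI_pred_pred]
  exact ⟨activeFlux_interface_update_exact hp hΔx.ne' ν,
    activeFlux_average_update_exact hp hΔx.ne' ν⟩

/-- With data sampled exactly from a polynomial `p` of degree at most 2 on a
uniform grid (interface point values and cell averages), the explicit Active
Flux update formulas reproduce the exact solution `u(x,Δt) = p(x − aΔt)` of
the advection equation after one time step, both for the interface value and
the cell average. -/
theorem active_flux_exact_on_quadratics_one_step
    (p : Polynomial ℝ) (hp : p.degree ≤ 2)
    (a Δx Δt ν : ℝ) (ha : 0 ≤ a) (hΔx : 0 < Δx) (hΔt : 0 ≤ Δt)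
    (hν : ν = a * Δt / Δx) (hν0 : 0 ≤ ν) (hν1 : ν ≤ 1)
    (xI : ℤ → ℝ) (xm : ℝ)
    -- `xI j` is the interface `x_{j+1/2} = x_{−1/2} + (j+1)Δx`
    (hxI : ∀ j : ℤ, xI j = xm + (j + 1) * Δx)
    (u : ℤ → ℝ) (ubar : ℤ → ℝ)
    (hu : ∀ j : ℤ, u j = p.eval (xI j))
    (hubar : ∀ j : ℤ, ubar j = (1 / Δx) * ∫ x in (xI (j - 1))..(xI j), p.eval x)
    (i : ℤ) :
    ν * (3 * ν - 2) * u (i - 1) + 6 * ν * (1 - ν) * ubar i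
        + (1 - ν) * (1 - 3 * ν) * u i = p.eval (xI i - a * Δt) ∧
    ν ^ 2 * (ν - 1) * u (i - 2) + ν ^ 2 * (3 - 2 * ν) * ubar (i - 1)
        + ν * (1 - ν) * u (i - 1) + (1 - ν) ^ 2 * (1 + 2 * ν) * ubar i
        - ν * (1 - ν) ^ 2 * u i =
      (1 / Δx) * ∫ x in (xI (i - 1))..(xI i), p.eval (x - a * Δt) :=
  active_flux_exact_on_quadratics_one_step_general p hp a Δx Δt ν hΔx hν xI xm hxI u ubar hu hubar i
end

section
/- Let N ≥ 1 and let α, β be real numbers with β/3 + 2α/3 = 1 (equivalently β + 2α = 3). On a periodic grid of N cells, let (u_{i−1/2}^n, u_i^n, u_{i+1/2}^n)_{i ∈ ℤ/Nℤ} be the point values at time n (interface values shared between neighboring cells), let (u_{i−1/2}^{*}, u_i^{*}, u_{i+1/2}^{*})_{i} be arbitrary predictor values (interface predictors shared between neighboring cells), and let (F_{i+1/2})_{i} be arbitrary interface fluxes shared between neighboring cells. Define Simpson averages S_i^n = (u_{i−1/2}^n + 4u_i^n + u_{i+1/2}^n)/6 and S_i^{*} = (u_{i−1/2}^{*} + 4u_i^{*}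 + u_{i+1/2}^{*})/6, the discrepancies δu_i = S_i^n + (Δt/Δx)(F_{i−1/2} − F_{i+1/2}) − S_i^{*}, and the corrected values u_i^{n+1} = u_i^{*} + α δu_i and u_{i+1/2}^{n+1} = u_{i+1/2}^{*} + β(δu_i + δu_{i+1})/2. Then the total corrected mass equals the total initial mass: Σ_{i ∈ ℤ/Nℤ} (u_{i−1/2}^{n+1} + 4u_i^{n+1} + u_{i+1/2}^{n+1})/6 = Σ_{i ∈ ℤ/Nℤ} S_i^n. -/
open Finset

/-- Mass conservation of the discrepancy-distribution correction on a periodic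
grid of `N ≥ 1` cells: if the distribution weights satisfy `β/3 + 2α/3 = 1`,
then for arbitrary predictor values and arbitrary shared interface fluxes the
total corrected Simpson mass equals the total initial Simpson mass.  Here
`uhalf i` denotes the interface value `u_{i+1/2}` (shared between cells `i`
and `i+1`), `uc i` the center value of cell `i`, and `F i` the flux
`F_{i+1/2}`; indices are taken in `ℤ/Nℤ`. -/
theorem discrepancy_distribution_mass_conservation
    (N : ℕ) [NeZero N] (α β : ℝ) (hαβ : β / 3 + 2 * α / 3 = 1)
    (Δt Δx : ℝ)
    (uhalfn ucn uhalfs ucs F : ZMod N → ℝ)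
    (Sn Ss δu ucNew uhalfNew : ZMod N → ℝ)
    (hSn : ∀ i : ZMod N, Sn i = (uhalfn (i - 1) + 4 * ucn i + uhalfn i) / 6)
    (hSs : ∀ i : ZMod N, Ss i = (uhalfs (i - 1) + 4 * ucs i + uhalfs i) / 6)
    (hδ : ∀ i : ZMod N, δu i = Sn i + (Δt / Δx) * (F (i - 1) - F i) - Ss i)
    (hucNew : ∀ i : ZMod N, ucNew i = ucs i + α * δu i)
    (huhalfNew : ∀ i : ZMod N,
      uhalfNew i = uhalfs i + β * (δu i + δu (i + 1)) / 2) :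
    ∑ i : ZMod N, (uhalfNew (i - 1) + 4 * ucNew i + uhalfNew i) / 6 =
      ∑ i : ZMod N, Sn i := by
  have shiftL : ∀ f : ZMod N → ℝ, ∑ i : ZMod N, f (i - 1) = ∑ i : ZMod N, f i :=
    fun f => Fintype.sum_equiv (Equiv.subRight 1) _ _ (fun i => rfl)
  have shiftR : ∀ f : ZMod N → ℝ, ∑ i : ZMod N, f (i + 1) = ∑ i : ZMod N, f i :=
    fun f => Fintype.sum_equiv (Equiv.addRight 1) _ _ (fun i => rfl)
  have key : ∀ i : ZMod N, (uhalfNew (i - 1) + 4 * ucNew i + uhalfNew i) / 6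
      = Ss i + (β / 12) * δu (i - 1) + (β / 6 + 2 * α / 3) * δu i
        + (β / 12) * δu (i + 1) := by
    intro i
    rw [huhalfNew, huhalfNew, hucNew, hSs]
    have : i - 1 + 1 = i := by ring
    rw [this]
    ring
  have hδsum : ∑ i : ZMod N, δu i = ∑ i : ZMod N, Sn i - ∑ i : ZMod N, Ss i := by
    simp_rw [hδ]
    rw [Finset.sum_sub_distrib, Finset.sum_add_distrib, ← Finset.mul_sum,
      Finset.sum_sub_distrib, shiftL (fun j => F j)]
    ring
  calc ∑ i : ZMod N, (uhalfNew (i - 1) + 4 * ucNew i + uhalfNew i) / 6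
      = ∑ i : ZMod N, (Ss i + (β / 12) * δu (i - 1)
          + (β / 6 + 2 * α / 3) * δu i + (β / 12) * δu (i + 1)) := by
        exact Finset.sum_congr rfl (fun i _ => key i)
    _ = ∑ i : ZMod N, Ss i + (β / 12) * ∑ i : ZMod N, δu (i - 1)
          + (β / 6 + 2 * α / 3) * ∑ i : ZMod N, δu i
          + (β / 12) * ∑ i : ZMod N, δu (i + 1) := by
        simp [Finset.sum_add_distrib, Finset.mul_sum]
    _ = ∑ i : ZMod N, Ss i + ∑ i : ZMod N, δu i := by
        rw [shiftL (fun j => δu j), shiftR (fun j => δu j)]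
        have : β / 12 + (β / 6 + 2 * α / 3) + β / 12 = 1 := by linarith
        linear_combination (∑ i : ZMod N, δu i) * this
    _ = ∑ i : ZMod N, Sn i := by rw [hδsum]; ring
end

section
/- Let p : ℝ × ℝ → ℝ be a polynomial of degree at most 3 in each variable separately, and consider a uniform two-dimensional grid with cell centers (x_i, v_j) = (x_0 + iΔx, v_0 + jΔv) and cell averages p̄_{i,j} = (1/(ΔxΔv))∫∫ over the cell [x_i − Δx/2, x_i + Δx/2] × [v_j − Δv/2, v_j + Δv/2] of p. Then the two-dimensional fourth-order histopolation formula is exact: p(x_i, v_j) = (1/576)(676 p̄_{i,j} − 26(p̄_{i+1,j} + p̄_{i−1,j} + p̄_{i,j+1} + p̄_{i,j−1}) + (p̄_{i+1,j+1} + p̄_{i+1,j−1} + p̄_{i−1,j+1} + p̄_{i−1,j−1})). -/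
lemma oneD_int (a : ℕ) (ha : a ≤ 3) (c h : ℝ) :
    26 * (∫ t in (c - h/2)..(c + h/2), t^a)
      - (∫ t in ((c + h) - h/2)..((c + h) + h/2), t^a)
      - (∫ t in ((c - h) - h/2)..((c - h) + h/2), t^a)
    = 24 * h * c ^ a := by
  interval_cases a <;>
    simp only [integral_pow] <;> push_cast <;> ring

/-- The two-dimensional fourth-order histopolation formula converting cell
averages on a uniform rectangular grid into cell-center point values is exact
for every bivariate polynomial of degree at most 3 in each variable
separately. -/
theorem histopolation_2d_exact_on_bicubics
    (p : MvPolynomial (Fin 2) ℝ)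
    (hpx : p.degreeOf 0 ≤ 3) (hpv : p.degreeOf 1 ≤ 3)
    (Δx Δv x0 v0 : ℝ) (hΔx : 0 < Δx) (hΔv : 0 < Δv)
    (xc : ℤ → ℝ) (hxc : ∀ i : ℤ, xc i = x0 + i * Δx)
    (vc : ℤ → ℝ) (hvc : ∀ j : ℤ, vc j = v0 + j * Δv)
    (pbar : ℤ → ℤ → ℝ)
    (hpbar : ∀ i j : ℤ,
      pbar i j = (1 / (Δx * Δv)) *
        ∫ x in (xc i - Δx / 2)..(xc i + Δx / 2),
          ∫ v in (vc j - Δv / 2)..(vc j + Δv / 2),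
            MvPolynomial.eval ![x, v] p)
    (i j : ℤ) :
    MvPolynomial.eval ![xc i, vc j] p =
      (1 / 576) * (676 * pbar i j
        - 26 * (pbar (i + 1) j + pbar (i - 1) j + pbar i (j + 1)
          + pbar i (j - 1))
        + (pbar (i + 1) (j + 1) + pbar (i + 1) (j - 1)
          + pbar (i - 1) (j + 1) + pbar (i - 1) (j - 1))) := by
  have hΔx' : Δx ≠ 0 := ne_of_gt hΔx
  have hΔv' : Δv ≠ 0 := ne_of_gt hΔv
  set Ix : ℕ → ℤ → ℝ :=
    fun a k => ∫ t in (xc k - Δx/2)..(xc k + Δx/2), t^a with hIx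
  set Iv : ℕ → ℤ → ℝ :=
    fun b l => ∫ t in (vc l - Δv/2)..(vc l + Δv/2), t^b with hIv
  -- pbar as an explicit finite sum over the monomials of p
  have hpb : ∀ k l : ℤ, pbar k l = (1/(Δx*Δv)) *
      ∑ m ∈ p.support, p.coeff m * Ix (m 0) k * Iv (m 1) l := by
    intro k l
    rw [hpbar]
    congr 1
    have h1 : ∀ x : ℝ,
        (∫ v in (vc l - Δv/2)..(vc l + Δv/2), MvPolynomial.eval ![x, v] p)
          = ∑ m ∈ p.support, p.coeff m * x ^ (m 0) * Iv (m 1) l := by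
      intro x
      have hev : ∀ v : ℝ, MvPolynomial.eval ![x, v] p
          = ∑ m ∈ p.support, p.coeff m * x ^ (m 0) * v ^ (m 1) := by
        intro v
        rw [MvPolynomial.eval_eq']
        refine Finset.sum_congr rfl fun m _ => ?_
        rw [Fin.prod_univ_two]
        simp [mul_assoc]
      simp_rw [hev]
      rw [intervalIntegral.integral_finset_sum]
      · refine Finset.sum_congr rfl fun m _ => ?_
        rw [intervalIntegral.integral_const_mul]
      · intro m _
        exact ((continuous_const.mul (continuous_pow _))).intervalIntegrable _ _
    simp_rw [h1]
    rw [intervalIntegral.integral_finset_sum]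
    · refine Finset.sum_congr rfl fun m _ => ?_
      have rearr : ∀ x : ℝ, p.coeff m * x ^ (m 0) * Iv (m 1) l
          = (p.coeff m * Iv (m 1) l) * x ^ (m 0) := fun x => by ring
      simp_rw [rearr]
      rw [intervalIntegral.integral_const_mul]
      simp only [hIx]
      ring
    · intro m _
      exact (((continuous_const.mul (continuous_pow _)).mul
        continuous_const)).intervalIntegrable _ _
  -- 1D exactness for each coordinate
  have key_x : ∀ a : ℕ, a ≤ 3 →
      26 * Ix a i - Ix a (i+1) - Ix a (i-1) = 24 * Δx * (xc i)^a := by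
    intro a ha
    have e1 : xc (i+1) = xc i + Δx := by rw [hxc, hxc]; push_cast; ring
    have e2 : xc (i-1) = xc i - Δx := by rw [hxc, hxc]; push_cast; ring
    have h := oneD_int a ha (xc i) Δx
    simp only [hIx, e1, e2]
    exact h
  have key_v : ∀ b : ℕ, b ≤ 3 →
      26 * Iv b j - Iv b (j+1) - Iv b (j-1) = 24 * Δv * (vc j)^b := by
    intro b hb
    have e1 : vc (j+1) = vc j + Δv := by rw [hvc, hvc]; push_cast; ring
    have e2 : vc (j-1) = vc j - Δv := by rw [hvc, hvc]; push_cast; ring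
    have h := oneD_int b hb (vc j) Δv
    simp only [hIv, e1, e2]
    exact h
  -- assemble
  rw [hpb, hpb, hpb, hpb, hpb, hpb, hpb, hpb, hpb, MvPolynomial.eval_eq']
  simp only [Fin.prod_univ_two, Matrix.cons_val_zero, Matrix.cons_val_one,
    Matrix.head_cons, Finset.mul_sum, ← Finset.sum_sub_distrib,
    ← Finset.sum_add_distrib]
  refine Finset.sum_congr rfl fun m hm => ?_
  have ha : m 0 ≤ 3 := by
    rw [MvPolynomial.degreeOf_eq_sup] at hpx
    exact le_trans (Finset.le_sup (f := fun m => m 0) hm) hpx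
  have hb : m 1 ≤ 3 := by
    rw [MvPolynomial.degreeOf_eq_sup] at hpv
    exact le_trans (Finset.le_sup (f := fun m => m 1) hm) hpv
  have kx := key_x (m 0) ha
  have kv := key_v (m 1) hb
  have hprod : (26 * Ix (m 0) i - Ix (m 0) (i+1) - Ix (m 0) (i-1)) *
      (26 * Iv (m 1) j - Iv (m 1) (j+1) - Iv (m 1) (j-1))
      = 576 * (Δx*Δv) * ((xc i)^(m 0) * (vc j)^(m 1)) := by
    rw [kx, kv]; ring
  field_simp
  linear_combination (-(p.coeff m)) * hprod
end
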